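/- Let N ≤ H and C be subgroups of a finite group G, let θ ∈ Irr(N), and suppose Ind_N^H θ is a positive integer multiple of a single irreducible character η of H. If θ restricted to N ∩ C contains the trivial character, then η restricted to H ∩ C contains the trivial character. -/

import Mathlib

open scoped BigOperators Classical

open CategoryTheory in
/-- `χ` is the character of an irreducible complex representation of `G`. -/
def IsIrrChar (G : Type) [Group G] [Fintype G] (χ : G → ℂ) : Prop :=
  ∃ V : FDRep ℂ G, Simple V ∧ χ = fun g => V.character g

/-- The character of `G` induced from the character `σ` of the subgroup `H`. -/
noncomputable def indChar {G : Type} [Group G] [Fintype G] (H : Subgroup G)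
    (σ : H → ℂ) (g : G) : ℂ :=
  (Fintype.card H : ℂ)⁻¹ * ∑ x : G, if h : x⁻¹ * g * x ∈ H then σ ⟨x⁻¹ * g * x, h⟩ else 0

lemma sum_char_nat {K : Type} [Group K] [Fintype K] (V : FDRep ℂ K) :
    ∃ n : ℕ, ∑ g : K, V.character g = n := by
  have h0 : (Fintype.card K : ℂ) ≠ 0 := Nat.cast_ne_zero.mpr Fintype.card_ne_zero
  have : Invertible (Fintype.card K : ℂ) := invertibleOfNonzero h0
  refine ⟨Fintype.card K * Module.finrank ℂ (Representation.invariants V.ρ), ?_⟩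
  have h := FDRep.average_char_eq_finrank_invariants V
  rw [Nat.card_eq_fintype_card] at h
  push_cast
  field_simp at h ⊢
  linear_combination h

lemma sum_char_sub_nat {K : Type} [Group K] [Fintype K] (χ : K → ℂ)
    (hχ : IsIrrChar K χ) (S : Subgroup K) :
    ∃ n : ℕ, ∑ x : K, (if x ∈ S then χ x else 0) = n := by
  obtain ⟨V, -, rfl⟩ := hχ
  obtain ⟨n, hn⟩ := sum_char_nat (FDRep.of (V.ρ.comp S.subtype))
  refine ⟨n, ?_⟩
  rw [← hn, ← Finset.sum_filter,
    Finset.sum_subtype (p := fun x => x ∈ S) _ (by simp) (fun x => V.character x)]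
  rfl

lemma sum_dite_subtype {α : Type*} [Fintype α] (p : α → Prop) [DecidablePred p]
    (Φ : {x // p x} → ℂ) :
    ∑ x : α, (if h : p x then Φ ⟨x, h⟩ else 0) = ∑ x : {x // p x}, Φ x := by
  classical
  rw [← Finset.sum_filter_add_sum_filter_not Finset.univ p]
  have h2 : (∑ x ∈ Finset.univ.filter (fun x => ¬ p x),
      (if h : p x then Φ ⟨x, h⟩ else 0)) = 0 :=
    Finset.sum_eq_zero fun x hx => dif_neg (Finset.mem_filter.mp hx).2
  rw [h2, add_zero,
    Finset.sum_subtype (p := p) _ (by simp) (fun x => if h : p x then Φ ⟨x, h⟩ else 0)]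
  exact Finset.sum_congr rfl fun x _ => by rw [dif_pos x.2]

lemma key_sum (G : Type) [Group G] [Fintype G] (N H C : Subgroup G) (hNH : N ≤ H)
    (θ : ↥N → ℂ) (y : ↥H) :
    (∑ g : ↥H, if (g : G) ∈ C then
        (if h : y⁻¹ * g * y ∈ N.subgroupOf H then
          θ ⟨((y⁻¹ * g * y : ↥H) : G), Subgroup.mem_subgroupOf.mp h⟩ else 0) else 0)
    = ∑ w : ↥N, if (y : G) * ↑w * (y : G)⁻¹ ∈ C then θ w else 0 := by
  classical
  rw [← Fintype.sum_equiv (MulAut.conj y).toEquiv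
    (fun z : ↥H => if ((y * z * y⁻¹ : ↥H) : G) ∈ C then
        (if h : z ∈ N.subgroupOf H then θ ⟨(z : G), Subgroup.mem_subgroupOf.mp h⟩ else 0) else 0)
    (fun g : ↥H => if (g : G) ∈ C then
        (if h : y⁻¹ * g * y ∈ N.subgroupOf H then
          θ ⟨((y⁻¹ * g * y : ↥H) : G), Subgroup.mem_subgroupOf.mp h⟩ else 0) else 0)
    ?_]
  · have : ∀ z : ↥H,
        (if ((y * z * y⁻¹ : ↥H) : G) ∈ C then
          (if h : z ∈ N.subgroupOf H then θ ⟨(z : G), Subgroup.mem_subgroupOf.mp h⟩ else 0) else 0)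
        = (if h : z ∈ N.subgroupOf H then
            (if ((y * z * y⁻¹ : ↥H) : G) ∈ C then θ ⟨(z : G), Subgroup.mem_subgroupOf.mp h⟩ else 0)
          else 0) := by
      intro z; by_cases h1 : ((y * z * y⁻¹ : ↥H) : G) ∈ C <;>
        by_cases h2 : z ∈ N.subgroupOf H <;> simp [h1, h2]
    rw [Finset.sum_congr rfl fun z _ => this z]
    rw [sum_dite_subtype (fun z : ↥H => z ∈ N.subgroupOf H)
      (fun z => if ((y * z.1 * y⁻¹ : ↥H) : G) ∈ C then
        θ ⟨(z.1 : G), Subgroup.mem_subgroupOf.mp z.2⟩ else 0)]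
    refine Fintype.sum_equiv (Subgroup.subgroupOfEquivOfLe hNH).toEquiv _ _ ?_
    intro z
    have hz : ((Subgroup.subgroupOfEquivOfLe hNH z : ↥N) : G) = ((z : ↥H) : G) := rfl
    have hθz : θ ⟨((z : ↥H) : G), Subgroup.mem_subgroupOf.mp z.2⟩
        = θ (Subgroup.subgroupOfEquivOfLe hNH z) := congrArg θ (Subtype.ext hz.symm)
    simp only [MulEquiv.toEquiv_eq_coe, EquivLike.coe_coe]
    exact if_congr (by rw [hz]; push_cast; exact Iff.rfl) hθz rfl
  · intro z
    simp only [MulEquiv.toEquiv_eq_coe, EquivLike.coe_coe, MulAut.conj_apply]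
    have h3 : y⁻¹ * (y * z * y⁻¹) * y = z := by group
    simp [h3]

/-- If `Ind_N^H θ = m · η` for an irreducible `η` of `H` and a positive integer `m`, and
`θ|_{N ∩ C}` contains the trivial character, then `η|_{H ∩ C}` contains the trivial
character. -/
theorem stmt3 (G : Type) [Group G] [Fintype G] (N H C : Subgroup G) (hNH : N ≤ H)
    (θ : ↥N → ℂ) (hθ : IsIrrChar ↥N θ) (η : ↥H → ℂ) (hη : IsIrrChar ↥H η)
    (m : ℕ) (hm : 0 < m)
    (hInd : ∀ x : ↥H,
      indChar (N.subgroupOf H) (fun n => θ ⟨n.1.1, Subgroup.mem_subgroupOf.mp n.2⟩) x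
        = (m : ℂ) * η x)
    (h1 : (∑ x : ↥N, if (x : G) ∈ C then θ x else 0) ≠ 0) :
    (∑ x : ↥H, if (x : G) ∈ C then η x else 0) ≠ 0 := by
  classical
  set f : ↥H → ℂ := fun y => ∑ w : ↥N, if (y : G) * ↑w * (y : G)⁻¹ ∈ C then θ w else 0 with hf
  set c : ℂ := (Fintype.card (N.subgroupOf H) : ℂ) with hc
  have hc0 : c ≠ 0 := Nat.cast_ne_zero.mpr Fintype.card_ne_zero
  -- step 1 : the induced-character sum equals m * goal sum
  have hstep1 : (∑ x : ↥H, if (x : G) ∈ C then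
      indChar (N.subgroupOf H) (fun n => θ ⟨n.1.1, Subgroup.mem_subgroupOf.mp n.2⟩) x else 0)
      = (m : ℂ) * ∑ x : ↥H, (if (x : G) ∈ C then η x else 0) := by
    rw [Finset.mul_sum]
    exact Finset.sum_congr rfl fun x _ => by
      by_cases h : (x : G) ∈ C <;> simp [h, hInd x]
  -- step 2 : the induced-character sum equals c⁻¹ * ∑ y, f y
  have hstep2 : (∑ x : ↥H, if (x : G) ∈ C then
      indChar (N.subgroupOf H) (fun n => θ ⟨n.1.1, Subgroup.mem_subgroupOf.mp n.2⟩) x else 0)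
      = c⁻¹ * ∑ y : ↥H, f y := by
    have hA : ∀ x : ↥H, (if (x : G) ∈ C then
        indChar (N.subgroupOf H) (fun n => θ ⟨n.1.1, Subgroup.mem_subgroupOf.mp n.2⟩) x else 0)
        = c⁻¹ * ∑ y : ↥H, (if (x : G) ∈ C then
            (if h : y⁻¹ * x * y ∈ N.subgroupOf H then
              θ ⟨((y⁻¹ * x * y : ↥H) : G), Subgroup.mem_subgroupOf.mp h⟩ else 0) else 0) := by
      intro x
      by_cases h : (x : G) ∈ C
      · simp only [h, if_true, indChar]; rfl
      · simp [h]
    rw [Finset.sum_congr rfl fun x _ => hA x, ← Finset.mul_sum]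
    congr 1
    rw [Finset.sum_comm]
    exact Finset.sum_congr rfl fun y _ => key_sum G N H C hNH θ y
  -- step 3 : each f y is a natural number
  have hfn : ∀ y : ↥H, ∃ n : ℕ, f y = n := by
    intro y
    obtain ⟨n, hn⟩ := sum_char_sub_nat θ hθ
      (Subgroup.comap N.subtype (Subgroup.comap (MulAut.conj (y : G)).toMonoidHom C))
    refine ⟨n, ?_⟩
    rw [← hn]
    exact Finset.sum_congr rfl fun w _ => by
      simp [Subgroup.mem_subgroupOf, Subgroup.mem_comap, MulAut.conj_apply]
  choose n hn using hfn
  -- step 4 : f 1 ≠ 0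
  have hf1 : f 1 = ∑ x : ↥N, (if (x : G) ∈ C then θ x else 0) := by
    refine Finset.sum_congr rfl fun w _ => ?_
    simp
  have hn1 : n 1 ≠ 0 := by
    intro h
    apply h1
    rw [← hf1, hn 1, h, Nat.cast_zero]
  -- step 5 : ∑ y, f y ≠ 0
  have hsumf : (∑ y : ↥H, f y) ≠ 0 := by
    have : (∑ y : ↥H, f y) = ((∑ y : ↥H, n y : ℕ) : ℂ) := by
      push_cast
      exact Finset.sum_congr rfl fun y _ => hn y
    rw [this]
    rw [Nat.cast_ne_zero]
    intro h
    exact hn1 ((Finset.sum_eq_zero_iff.mp h) 1 (Finset.mem_univ 1))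
  -- conclude
  intro hgoal
  rw [hstep1, hgoal, mul_zero] at hstep2
  exact hsumf (by
    have := hstep2.symm
    field_simp at this
    simpa using this)
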